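/- Fix 0 < s < t. The map F(z) = (1/4)[s² - (t-s+√(t²-4z))²] (standard branch of square root) maps ℂ⁺ into ℂ⁺, satisfies F(z̄) = conj(F(z)), Im F(z) ≥ Im z for z ∈ ℂ⁺, and lim_{y→∞} F(iy)/(iy) = 1. -/

import Mathlib

/-!
Since `(√w)² = w` for the principal branch, `F(z) = z - (t - s)/2 · (√(t² - 4z) + t)`.
For `Im z > 0` the number `t² - 4z` lies in the lower half-plane, hence so does its principal
square root, and therefore `Im F(z) - Im z = -(t - s)/2 · Im √(t² - 4z) > 0`. Away from the
negative real axis the principal root commutes with conjugation, and `‖√w‖ = ‖w‖^{1/2} = o(‖w‖)` gives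
`F(iy)/(iy) → 1`.
-/

/-- Subordination map F(z) = (1/4)[s² - (t-s+√(t²-4z))²]. -/
noncomputable def Fsub (s t : ℝ) (z : ℂ) : ℂ :=
  (1/4) * ((s:ℂ)^2 - ((t:ℂ) - (s:ℂ) + ((t:ℂ)^2 - 4*z) ^ ((1:ℂ)/2))^2)

open Complex ComplexConjugate Filter Topology Bornology

lemma cpow_one_half_sq (x : ℂ) : (x ^ ((1:ℂ)/2)) ^ 2 = x := by
  simp [one_div]

lemma norm_cpow_one_half (x : ℂ) : ‖x ^ ((1:ℂ)/2)‖ = √‖x‖ := by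
  rw [Real.sqrt_eq_rpow, ← norm_cpow_real]
  norm_num

lemma im_cpow_one_half_neg {x : ℂ} (hx : x.im < 0) : (x ^ ((1:ℂ)/2)).im < 0 := by
  have hx0 : x ≠ 0 := by rintro rfl; simp at hx
  have harg : (log x * ((1:ℂ)/2)).im = x.arg / 2 := by
    simp [mul_im, log_im]; ring
  rw [cpow_def_of_ne_zero hx0, exp_im, harg]
  refine mul_neg_of_pos_of_neg (Real.exp_pos _) (Real.sin_neg_of_neg_of_neg_pi_lt ?_ ?_)
  · linarith [arg_neg_iff.2 hx]
  · linarith [neg_pi_lt_arg x, Real.pi_pos]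

lemma conj_cpow_one_half {x : ℂ} (hx : x.arg ≠ Real.pi) :
    conj x ^ ((1:ℂ)/2) = conj (x ^ ((1:ℂ)/2)) := by
  rw [conj_cpow x _ hx, map_div₀, map_one, map_ofNat]

lemma tendsto_cpow_one_half_div_cobounded :
    Tendsto (fun x : ℂ => x ^ ((1:ℂ)/2) / x) (cobounded ℂ) (𝓝 0) := by
  rw [tendsto_zero_iff_norm_tendsto_zero]
  refine ((tendsto_rpow_neg_atTop one_half_pos).comp tendsto_norm_cobounded_atTop).congr' ?_
  filter_upwards [eventually_ne_cobounded 0] with x hx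
  rw [Function.comp_apply, norm_div, norm_cpow_one_half, Real.sqrt_eq_rpow,
    show -(1/2:ℝ) = 1/2 - 1 by norm_num, Real.rpow_sub (norm_pos_iff.2 hx), Real.rpow_one]

lemma Fsub_eq_sub (s t : ℝ) (z : ℂ) :
    Fsub s t z = z - (((t - s) / 2 : ℝ) : ℂ) * (((t:ℂ)^2 - 4*z) ^ ((1:ℂ)/2) + t) := by
  unfold Fsub
  push_cast
  linear_combination (-(1:ℂ)/4) * cpow_one_half_sq ((t:ℂ)^2 - 4*z)

lemma im_sq_sub_four_mul (t : ℝ) (z : ℂ) : ((t:ℂ)^2 - 4*z).im = -4 * z.im := by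
  simp [← ofReal_pow]

lemma im_lt_im_Fsub {s t : ℝ} (hst : s < t) {z : ℂ} (hz : 0 < z.im) :
    z.im < (Fsub s t z).im := by
  have hroot := im_cpow_one_half_neg (x := (t:ℂ)^2 - 4*z) (by rw [im_sq_sub_four_mul]; linarith)
  have hc : 0 < (t - s) / 2 := by linarith
  rw [Fsub_eq_sub]
  simp only [sub_im, mul_im, add_im, ofReal_im, ofReal_re]
  nlinarith

lemma Fsub_conj (s t : ℝ) {z : ℂ} (hz : z.im ≠ 0) :
    Fsub s t (conj z) = conj (Fsub s t z) := by
  have harg : ((t:ℂ)^2 - 4*z).arg ≠ Real.pi := fun h ↦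
    hz (by linarith [im_sq_sub_four_mul t z ▸ (arg_eq_pi_iff.1 h).2])
  have hroot := conj_cpow_one_half harg
  simp only [map_sub, map_mul, map_pow, map_ofNat, conj_ofReal] at hroot
  rw [Fsub_eq_sub, Fsub_eq_sub, hroot]
  simp only [map_sub, map_mul, map_add, conj_ofReal]

lemma tendsto_ofReal_mul_I_atTop :
    Tendsto (fun y : ℝ => (y : ℂ) * I) atTop (cobounded ℂ) := by
  rw [← tendsto_norm_atTop_iff_cobounded]
  simpa using tendsto_abs_atTop_atTop

lemma tendsto_Fsub_ofReal_mul_I_div (s t : ℝ) :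
    Tendsto (fun y : ℝ => Fsub s t (y * I) / (y * I)) atTop (𝓝 1) := by
  have hinv : Tendsto (fun y : ℝ => ((y : ℂ) * I)⁻¹) atTop (𝓝 0) :=
    tendsto_inv₀_cobounded.comp tendsto_ofReal_mul_I_atTop
  have hw : Tendsto (fun y : ℝ => (t:ℂ)^2 - 4 * (y * I)) atTop (cobounded ℂ) := by
    refine ((tendsto_const_sub_cobounded ((t:ℂ)^2)).comp
      (tendsto_ofReal_mul_I_atTop.comp (tendsto_id.const_mul_atTop four_pos))).congr fun y ↦ ?_
    simp only [Function.comp_apply, id, ofReal_mul, ofReal_ofNat, mul_assoc]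
  have hlim := ((((tendsto_cpow_one_half_div_cobounded.comp hw).mul
    ((hinv.const_mul ((t:ℂ)^2)).sub_const 4)).add (hinv.const_mul (t:ℂ))).const_mul
    (((t - s) / 2 : ℝ) : ℂ)).const_sub 1
  simp only [zero_mul, zero_add, mul_zero, sub_zero] at hlim
  refine hlim.congr' ?_
  filter_upwards [eventually_ne_atTop 0] with y hy
  have hy' : (y : ℂ) ≠ 0 := ofReal_ne_zero.2 hy
  have hw0 : (t:ℂ)^2 - 4 * (y * I) ≠ 0 := fun h ↦ hy (by simpa [← ofReal_pow] using congrArg im h)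
  have hsplit : (t:ℂ)^2 * (y * I)⁻¹ - 4 = ((t:ℂ)^2 - 4 * (y * I)) / (y * I) := by
    field_simp
  rw [Function.comp_apply, hsplit, div_mul_div_cancel₀ hw0, Fsub_eq_sub]
  field_simp

theorem stmt13_general (s t : ℝ) (hst : s < t) :
    (∀ z : ℂ, 0 < z.im → 0 < (Fsub s t z).im) ∧
    (∀ z : ℂ, z.im ≠ 0 → Fsub s t (starRingEnd ℂ z) = starRingEnd ℂ (Fsub s t z)) ∧
    (∀ z : ℂ, 0 < z.im → z.im ≤ (Fsub s t z).im) ∧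
    Filter.Tendsto (fun y : ℝ => Fsub s t (y * Complex.I) / (y * Complex.I))
      Filter.atTop (nhds 1) :=
  ⟨fun _ hz ↦ hz.trans (im_lt_im_Fsub hst hz), fun _ hz ↦ Fsub_conj s t hz,
    fun _ hz ↦ (im_lt_im_Fsub hst hz).le, tendsto_Fsub_ofReal_mul_I_div s t⟩

theorem stmt13 (s t : ℝ) (hs : 0 < s) (hst : s < t) :
    (∀ z : ℂ, 0 < z.im → 0 < (Fsub s t z).im) ∧
    (∀ z : ℂ, z.im ≠ 0 → Fsub s t (starRingEnd ℂ z) = starRingEnd ℂ (Fsub s t z)) ∧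
    (∀ z : ℂ, 0 < z.im → z.im ≤ (Fsub s t z).im) ∧
    Filter.Tendsto (fun y : ℝ => Fsub s t (y * Complex.I) / (y * Complex.I))
      Filter.atTop (nhds 1) :=
  stmt13_general s t hst
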